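/- Suppose u ∈ P(R) is minuscule and u = Σ_{i∈I} ℓ_i α_i with ℓ_i ≥ 0 for all i. Set u' := Σ_{i∈I} ℓ'_i α_i, where ℓ'_i := ℓ_i − ⌊ℓ_i⌋. Then there exists an element w ∈ W that is u'-minuscule and satisfies w(u') = u. -/

import Mathlib

/-!
Common setup: an abstract reduced irreducible crystallographic root system `R`
inside a real inner product space `E`, with simple roots `α i` (`i : ι`) forming
a basis of `E`, Weyl group generated by the reflections in the roots
(equivalently, by the simple reflections), coroot pairing
`⟨x, a∨⟩ = 2 (x, a) / (a, a)`, weight lattice `P(R)`, root lattices `Q(R)`,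
`Q(R_J)`, etc.
-/

open scoped BigOperators

noncomputable section

/-- the pairing `⟨x, a∨⟩ = 2 (x, a)/(a, a)` of `x` with the coroot of `a`. -/
def pairR {E : Type} [NormedAddCommGroup E] [InnerProductSpace ℝ E] (x a : E) : ℝ :=
  2 * (inner ℝ x a : ℝ) / (inner ℝ a a : ℝ)

/-- the reflection in (the hyperplane orthogonal to) `a`. -/
def reflFun {E : Type} [NormedAddCommGroup E] [InnerProductSpace ℝ E] (a : E) (x : E) : E :=
  x - pairR x a • a

/-- A reduced irreducible crystallographic root system in a real inner product
space `E`, whose set of simple roots `simple : ι → E` is a basis of `E`. -/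
structure RootSystemCtx (ι E : Type) [Fintype ι] [DecidableEq ι]
    [NormedAddCommGroup E] [InnerProductSpace ℝ E] : Type where
  Roots : Set E
  simple : ι → E
  simple_mem : ∀ i, simple i ∈ Roots
  finite : Roots.Finite
  ne_zero : ∀ a ∈ Roots, a ≠ 0
  reduced : ∀ a ∈ Roots, ∀ t : ℝ, t • a ∈ Roots → t = 1 ∨ t = -1
  crystal : ∀ a ∈ Roots, ∀ b ∈ Roots, ∃ n : ℤ, pairR a b = (n : ℝ)
  refl_stable : ∀ a ∈ Roots, ∀ b ∈ Roots, reflFun b a ∈ Roots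
  indep : LinearIndependent ℝ simple
  span_top : Submodule.span ℝ (Set.range simple) = ⊤
  pos_neg : ∀ a ∈ Roots, (∃ c : ι → ℕ, a = ∑ i, (c i : ℝ) • simple i) ∨
      (∃ c : ι → ℕ, a = -∑ i, (c i : ℝ) • simple i)
  irred : ∀ R1 R2 : Set E, Roots = R1 ∪ R2 →
      (∀ a ∈ R1, ∀ b ∈ R2, (inner ℝ a b : ℝ) = 0) → R1 = ∅ ∨ R2 = ∅

namespace RootSystemCtx

variable {ι E : Type} [Fintype ι] [DecidableEq ι]
  [NormedAddCommGroup E] [InnerProductSpace ℝ E]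
variable (S : RootSystemCtx ι E)

/-- `R` is simply laced: `⟨a, b∨⟩ ∈ {-1, 0, 1}` for roots `b ≠ ± a`. -/
def SimplyLaced : Prop :=
  ∀ a ∈ S.Roots, ∀ b ∈ S.Roots, b ≠ a → b ≠ -a →
    pairR a b = -1 ∨ pairR a b = 0 ∨ pairR a b = 1

/-- membership in the weight lattice `P(R)`. -/
def IsWeight (x : E) : Prop := ∀ a ∈ S.Roots, ∃ n : ℤ, pairR x a = (n : ℝ)

/-- `x` is dominant: `⟨x, αᵢ∨⟩ ≥ 0` for all simple roots. -/
def IsDominant (x : E) : Prop := ∀ i, 0 ≤ pairR x (S.simple i)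

/-- positive roots: roots that are nonnegative combinations of simple roots. -/
def IsPositiveRoot (a : E) : Prop :=
  a ∈ S.Roots ∧ ∃ c : ι → ℕ, a = ∑ i, (c i : ℝ) • S.simple i

/-- the root lattice `Q(R)`. -/
def rootLattice : AddSubgroup E := AddSubgroup.closure S.Roots

/-- the root lattice `Q(R_J)` of the sub-root system `R_J`. -/
def rootLatticeJ (J : Finset ι) : AddSubgroup E :=
  AddSubgroup.closure (S.simple '' ↑J)

/-- the sub-root system `R_J` determined by the simple roots `α_j`, `j ∈ J`. -/
def RootsJ (J : Finset ι) : Set E :=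
  {a | a ∈ S.Roots ∧ a ∈ Submodule.span ℝ (S.simple '' ↑J)}

/-- `x` is `J`-dominant. -/
def IsJDominant (J : Finset ι) (x : E) : Prop := ∀ j ∈ J, 0 ≤ pairR x (S.simple j)

/-- `x` is `J`-minuscule: `⟨x, a∨⟩ ∈ {-1,0,1}` for all `a ∈ R_J`. -/
def IsJMinuscule (J : Finset ι) (x : E) : Prop :=
  ∀ a ∈ S.RootsJ J, pairR x a = -1 ∨ pairR x a = 0 ∨ pairR x a = 1

/-- the action of a word `[i₁, …, i_t]` of simple reflections:
`s_{i₁} ∘ ⋯ ∘ s_{i_t}`. -/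
def wordAct (l : List ι) : E → E :=
  l.foldr (fun i f => reflFun (S.simple i) ∘ f) id

/-- membership in the Weyl group `W` (generated by the simple reflections). -/
def InWeyl (w : E → E) : Prop := ∃ l : List ι, S.wordAct l = w

/-- the Weyl group orbit `W x`. -/
def weylOrbit (x : E) : Set E := {y | ∃ l : List ι, y = S.wordAct l x}

/-- a word is reduced if no shorter word gives the same Weyl group element. -/
def IsReducedWord (l : List ι) : Prop :=
  ∀ l' : List ι, S.wordAct l' = S.wordAct l → l.length ≤ l'.length

/-- `w ∈ W` is `λ`-minuscule: some (equivalently, any) reduced expression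
`w = s_{i₁} ⋯ s_{i_t}` satisfies
`⟨s_{i_{r+1}} ⋯ s_{i_t} λ, α_{i_r}∨⟩ = -1` for all `1 ≤ r ≤ t`. -/
def IsMinusculeFor (lam : E) (w : E → E) : Prop :=
  ∃ l : List ι, S.wordAct l = w ∧ S.IsReducedWord l ∧
    ∀ r : Fin l.length,
      pairR (S.wordAct (l.drop (r + 1)) lam) (S.simple (l.get r)) = -1

/-- the basis of simple roots. -/
def simpleBasis : Module.Basis ι ℝ E := Module.Basis.mk S.indep S.span_top.ge

/-- `⟨x, ωᵢ⟩`: the pairing with the fundamental coweight `ωᵢ` dual to `αᵢ`,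
i.e. the `i`-th coordinate of `x` in the basis of simple roots. -/
def coweightPair (x : E) (i : ι) : ℝ := S.simpleBasis.repr x i

end RootSystemCtx

/-!
Write `u = u' + ∑ mᵢ αᵢ` with `mᵢ = ⌊ℓᵢ⌋`. As long as `m ≠ 0` there is a simple root `αⱼ` with
`mⱼ ≠ 0` and `⟨u, αⱼ∨⟩ = 1`; then `sⱼ u = u - αⱼ` is again minuscule, and induction on `m`
produces a word climbing from `u'` to `u` one simple root at a time.

Such a `j` exists because `u'` lies in the Weyl orbit of `u`: an antidominant element `y` of the
orbit has nonpositive coordinates, and since the simple roots are pairwise obtuse and the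
coordinates of `u'` lie in `[0, 1)`, one can climb from `y` to `u'` by simple reflections. Hence
`‖u'‖ = ‖u‖`, which forces `2 ⟪u, ∑ mᵢ αᵢ⟫ = ‖∑ mᵢ αᵢ‖² > 0`.

The word is reduced because a simple reflection changes the height of a minuscule element by at
most one, while along the word the height grows by exactly one per letter.
-/

open scoped RealInnerProductSpace

section Reflection

variable {E : Type} [NormedAddCommGroup E] [InnerProductSpace ℝ E]

lemma pairR_sub_left (x y a : E) : pairR (x - y) a = pairR x a - pairR y a := by
  simp only [pairR, inner_sub_left]; ring

lemma pairR_smul_left (c : ℝ) (x a : E) : pairR (c • x) a = c * pairR x a := by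
  simp only [pairR, real_inner_smul_left]; ring

lemma pairR_self {a : E} (ha : a ≠ 0) : pairR a a = 2 := by
  rw [pairR, mul_div_assoc, div_self (inner_self_ne_zero.2 ha), mul_one]

lemma pairR_pos_iff {a : E} (ha : a ≠ 0) (x : E) : 0 < pairR x a ↔ 0 < ⟪x, a⟫ := by
  have : 0 < ⟪a, a⟫ := real_inner_self_pos.2 ha
  rw [pairR, div_pos_iff_of_pos_right this, mul_pos_iff_of_pos_left two_pos]

lemma pairR_neg_iff {a : E} (ha : a ≠ 0) (x : E) : pairR x a < 0 ↔ ⟪x, a⟫ < 0 := by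
  have : 0 < ⟪a, a⟫ := real_inner_self_pos.2 ha
  rw [pairR, div_neg_iff]
  constructor
  · rintro (⟨_, h⟩ | ⟨h, _⟩) <;> linarith
  · exact fun h => Or.inr ⟨by linarith, this⟩

lemma inner_reflFun_reflFun {a : E} (ha : a ≠ 0) (x y : E) :
    ⟪reflFun a x, reflFun a y⟫ = ⟪x, y⟫ := by
  have : ⟪a, a⟫ ≠ 0 := inner_self_ne_zero.2 ha
  simp only [reflFun, pairR, inner_sub_left, inner_sub_right, real_inner_smul_left,
    real_inner_smul_right, real_inner_comm a x, real_inner_comm a y]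
  field_simp
  ring

lemma norm_reflFun {a : E} (ha : a ≠ 0) (x : E) : ‖reflFun a x‖ = ‖x‖ := by
  rw [norm_eq_sqrt_real_inner, norm_eq_sqrt_real_inner, inner_reflFun_reflFun ha]

lemma reflFun_reflFun {a : E} (ha : a ≠ 0) (x : E) : reflFun a (reflFun a x) = x := by
  have : pairR (reflFun a x) a = -pairR x a := by
    rw [reflFun, pairR_sub_left, pairR_smul_left, pairR_self ha]; ring
  rw [reflFun, this, reflFun, neg_smul, sub_neg_eq_add, sub_add_cancel]

lemma pairR_reflFun_left {a : E} (ha : a ≠ 0) (x b : E) :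
    pairR (reflFun a x) b = pairR x (reflFun a b) := by
  conv_lhs => rw [← reflFun_reflFun ha b]
  simp only [pairR, inner_reflFun_reflFun ha]

end Reflection

section NatVector

variable {ι : Type} [DecidableEq ι]

lemma sub_single_lt {m : ι → ℕ} {j : ι} (hj : m j ≠ 0) : m - Pi.single j 1 < m := by
  refine Pi.lt_def.2 ⟨fun i => tsub_le_self, j, ?_⟩
  simp; omega

variable [Fintype ι] {M : Type} [AddCommGroup M] [Module ℝ M]

lemma sum_natCast_add_single_smul (m : ι → ℕ) (j : ι) (v : ι → M) :
    ∑ i, ((m + Pi.single j 1 : ι → ℕ) i : ℝ) • v i = ∑ i, (m i : ℝ) • v i + v j := by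
  simp [add_smul, Finset.sum_add_distrib, Pi.single_apply]

lemma sum_natCast_sub_single_smul {m : ι → ℕ} {j : ι} (hj : m j ≠ 0) (v : ι → M) :
    ∑ i, ((m - Pi.single j 1 : ι → ℕ) i : ℝ) • v i = ∑ i, (m i : ℝ) • v i - v j := by
  have hm : m = (m - Pi.single j 1) + Pi.single j 1 := by
    funext i
    rcases eq_or_ne i j with rfl | h
    · simp; omega
    · simp [h]
  conv_rhs => rw [hm, sum_natCast_add_single_smul]
  abel

end NatVector

namespace RootSystemCtx

variable {ι E : Type} [Fintype ι] [DecidableEq ι] [NormedAddCommGroup E] [InnerProductSpace ℝ E]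
variable (S : RootSystemCtx ι E)

def IsMinuscule (x : E) : Prop :=
  ∀ a ∈ S.Roots, pairR x a = -1 ∨ pairR x a = 0 ∨ pairR x a = 1

def InUnitBox (z : E) : Prop := ∀ i, S.coweightPair z i ∈ Set.Ico (0 : ℝ) 1

def IsMinusculeWord (lam : E) (l : List ι) : Prop :=
  ∀ r : Fin l.length, pairR (S.wordAct (l.drop (r + 1)) lam) (S.simple (l.get r)) = -1

def height : E →ₗ[ℝ] ℝ := ∑ i, S.simpleBasis.coord i

variable {S}

lemma simple_ne_zero (i : ι) : S.simple i ≠ 0 := S.ne_zero _ (S.simple_mem i)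

@[simp]
lemma simpleBasis_apply (i : ι) : S.simpleBasis i = S.simple i := Module.Basis.mk_apply _ _ _

@[simp]
lemma coweightPair_sum_smul_simple (c : ι → ℝ) (i : ι) :
    S.coweightPair (∑ j, c j • S.simple j) i = c i := by
  simpa only [coweightPair, simpleBasis_apply] using congrFun (S.simpleBasis.repr_sum_self c) i

@[simp]
lemma coweightPair_simple (i j : ι) :
    S.coweightPair (S.simple j) i = (Pi.single j 1 : ι → ℝ) i := by
  simp [coweightPair, ← simpleBasis_apply, Pi.single_apply, Finsupp.single_apply, eq_comm]

lemma sum_coweightPair_smul_simple (x : E) : ∑ i, S.coweightPair x i • S.simple i = x := by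
  simpa only [coweightPair, simpleBasis_apply] using S.simpleBasis.sum_repr x

lemma coweightPair_sub (x y : E) (i : ι) :
    S.coweightPair (x - y) i = S.coweightPair x i - S.coweightPair y i := by
  simp [coweightPair]

lemma coweightPair_add (x y : E) (i : ι) :
    S.coweightPair (x + y) i = S.coweightPair x i + S.coweightPair y i := by
  simp [coweightPair]

lemma coweightPair_neg (x : E) (i : ι) : S.coweightPair (-x) i = -S.coweightPair x i := by
  simp [coweightPair]

lemma coweightPair_smul (c : ℝ) (x : E) (i : ι) :
    S.coweightPair (c • x) i = c * S.coweightPair x i := by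
  simp [coweightPair]

lemma inner_simple_simple_nonpos {i j : ι} (hij : i ≠ j) : ⟪S.simple i, S.simple j⟫ ≤ 0 := by
  by_contra! hpos
  obtain ⟨n, hn⟩ := S.crystal _ (S.simple_mem i) _ (S.simple_mem j)
  have hn_pos : (0 : ℝ) < n := hn ▸ (pairR_pos_iff (simple_ne_zero j) _).2 hpos
  have hcoord : ∀ k, S.coweightPair (reflFun (S.simple j) (S.simple i)) k =
      (Pi.single i 1 : ι → ℝ) k - n * (Pi.single j 1 : ι → ℝ) k := by
    intro k
    simp [reflFun, coweightPair_sub, coweightPair_smul, hn]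
  rcases S.pos_neg _ (S.refl_stable _ (S.simple_mem i) _ (S.simple_mem j)) with ⟨c, hc⟩ | ⟨c, hc⟩
  · have := hcoord j
    rw [hc, coweightPair_sum_smul_simple] at this
    simp [hij] at this
    linarith [(c j).cast_nonneg (α := ℝ)]
  · have := hcoord i
    rw [hc, coweightPair_neg, coweightPair_sum_smul_simple] at this
    simp [hij] at this
    linarith [(c i).cast_nonneg (α := ℝ)]

lemma coweightPair_nonpos_of_inner_simple_nonpos (v : E)
    (hv : ∀ j, 0 < S.coweightPair v j → ⟪v, S.simple j⟫ ≤ 0) (i : ι) :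
    S.coweightPair v i ≤ 0 := by
  set c := S.coweightPair v
  -- The positive part `p` of `v` pairs nonpositively with the simple roots in its support,
  -- because distinct simple roots are obtuse; hence `⟪p, p⟫ ≤ 0`.
  set p := ∑ k, max (c k) 0 • S.simple k with hp
  have hp_inner : ∀ j, 0 < c j → ⟪p, S.simple j⟫ ≤ 0 := by
    intro j hj
    have hpv : p = v + ∑ k, (max (c k) 0 - c k) • S.simple k := by
      conv_rhs => rw [← sum_coweightPair_smul_simple (S := S) v]
      rw [← Finset.sum_add_distrib]
      simp [p, c, sub_smul]
    have hrest : ∑ k, ⟪(max (c k) 0 - c k) • S.simple k, S.simple j⟫ ≤ 0 := by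
      refine Finset.sum_nonpos fun k _ => ?_
      rw [real_inner_smul_left]
      rcases eq_or_ne k j with rfl | hkj
      · simp [max_eq_left hj.le]
      · exact mul_nonpos_of_nonneg_of_nonpos (sub_nonneg.2 (le_max_left _ _))
          (inner_simple_simple_nonpos hkj)
    rw [hpv, inner_add_left, sum_inner]
    linarith [hv j hj]
  have hpp : ⟪p, p⟫ ≤ 0 := by
    nth_rewrite 2 [hp]
    rw [inner_sum]
    refine Finset.sum_nonpos fun j _ => ?_
    rw [real_inner_smul_right]
    rcases le_or_gt (c j) 0 with h | h
    · simp [max_eq_right h]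
    · exact mul_nonpos_of_nonneg_of_nonpos (le_max_right _ _) (hp_inner j h)
  have hpi : S.coweightPair p i = 0 := by rw [real_inner_self_nonpos.1 hpp, coweightPair]; simp
  simpa [hp] using hpi

@[simp]
lemma wordAct_nil (x : E) : S.wordAct [] x = x := rfl

@[simp]
lemma wordAct_cons (i : ι) (l : List ι) (x : E) :
    S.wordAct (i :: l) x = reflFun (S.simple i) (S.wordAct l x) := rfl

lemma wordAct_append (l₁ l₂ : List ι) (x : E) :
    S.wordAct (l₁ ++ l₂) x = S.wordAct l₁ (S.wordAct l₂ x) := by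
  induction l₁ with
  | nil => rfl
  | cons i l ih => simp [ih]

lemma norm_wordAct (l : List ι) (x : E) : ‖S.wordAct l x‖ = ‖x‖ := by
  induction l with
  | nil => rfl
  | cons i l ih => simp [norm_reflFun (simple_ne_zero i), ih]

lemma self_mem_weylOrbit (x : E) : x ∈ S.weylOrbit x := ⟨[], rfl⟩

lemma reflFun_mem_weylOrbit (i : ι) (x : E) : reflFun (S.simple i) x ∈ S.weylOrbit x := ⟨[i], rfl⟩

lemma weylOrbit_subset_of_mem {x y : E} (h : y ∈ S.weylOrbit x) :
    S.weylOrbit y ⊆ S.weylOrbit x := by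
  rintro z ⟨l', rfl⟩
  obtain ⟨l, rfl⟩ := h
  exact ⟨l' ++ l, (wordAct_append l' l x).symm⟩

lemma norm_of_mem_weylOrbit {x y : E} (h : y ∈ S.weylOrbit x) : ‖y‖ = ‖x‖ := by
  obtain ⟨l, rfl⟩ := h
  exact norm_wordAct l x

lemma isMinuscule_reflFun_iff (i : ι) {x : E} :
    S.IsMinuscule (reflFun (S.simple i) x) ↔ S.IsMinuscule x := by
  have reflect : ∀ y, S.IsMinuscule y → S.IsMinuscule (reflFun (S.simple i) y) := by
    intro y hy a ha
    rw [pairR_reflFun_left (simple_ne_zero i)]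
    exact hy _ (S.refl_stable a ha _ (S.simple_mem i))
  exact ⟨fun h => reflFun_reflFun (simple_ne_zero i) x ▸ reflect _ h, reflect x⟩

lemma isMinuscule_wordAct_iff (l : List ι) {x : E} :
    S.IsMinuscule (S.wordAct l x) ↔ S.IsMinuscule x := by
  induction l with
  | nil => rfl
  | cons i l ih => rw [wordAct_cons, isMinuscule_reflFun_iff, ih]

lemma IsMinuscule.of_mem_weylOrbit {x y : E} (hx : S.IsMinuscule x) (h : y ∈ S.weylOrbit x) :
    S.IsMinuscule y := by
  obtain ⟨l, rfl⟩ := h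
  exact (isMinuscule_wordAct_iff l).2 hx

lemma IsMinuscule.pairR_eq_one_of_inner_pos {x : E} (hx : S.IsMinuscule x) (i : ι)
    (h : 0 < ⟪x, S.simple i⟫) : pairR x (S.simple i) = 1 := by
  have hpos := (pairR_pos_iff (simple_ne_zero i) x).2 h
  rcases hx _ (S.simple_mem i) with h' | h' | h' <;> first | exact h' | linarith

lemma IsMinuscule.pairR_eq_neg_one_of_inner_neg {x : E} (hx : S.IsMinuscule x) (i : ι)
    (h : ⟪x, S.simple i⟫ < 0) : pairR x (S.simple i) = -1 := by
  have hneg := (pairR_neg_iff (simple_ne_zero i) x).2 h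
  rcases hx _ (S.simple_mem i) with h' | h' | h' <;> first | exact h' | linarith

@[simp]
lemma height_simple (i : ι) : S.height (S.simple i) = 1 := by
  simp [height, ← simpleBasis_apply, Finsupp.single_apply]

lemma height_reflFun_simple (i : ι) (x : E) :
    S.height (reflFun (S.simple i) x) = S.height x - pairR x (S.simple i) := by
  simp [reflFun]

lemma exists_abs_height_le : ∃ C, ∀ v : E, |S.height v| ≤ C * ‖v‖ := by
  have : FiniteDimensional ℝ E := Module.Finite.of_basis S.simpleBasis
  exact ⟨_, (LinearMap.toContinuousLinearMap S.height).le_opNorm⟩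

lemma IsMinuscule.height_wordAct_le {x : E} (hx : S.IsMinuscule x) (l : List ι) :
    S.height (S.wordAct l x) ≤ S.height x + l.length := by
  induction l with
  | nil => simp
  | cons i l ih =>
    have : -1 ≤ pairR (S.wordAct l x) (S.simple i) := by
      rcases (isMinuscule_wordAct_iff l).2 hx _ (S.simple_mem i) with h | h | h <;> rw [h] <;>
        norm_num
    rw [wordAct_cons, height_reflFun_simple, List.length_cons]
    push_cast
    linarith

lemma isMinusculeWord_nil (lam : E) : S.IsMinusculeWord lam [] := fun r => r.elim0

lemma isMinusculeWord_cons {lam : E} {i : ι} {l : List ι} :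
    S.IsMinusculeWord lam (i :: l) ↔
      pairR (S.wordAct l lam) (S.simple i) = -1 ∧ S.IsMinusculeWord lam l := by
  simp [IsMinusculeWord, Fin.forall_fin_succ]

lemma IsMinusculeWord.height_wordAct {lam : E} {l : List ι} (h : S.IsMinusculeWord lam l) :
    S.height (S.wordAct l lam) = S.height lam + l.length := by
  induction l with
  | nil => simp
  | cons i l ih =>
    obtain ⟨hi, hl⟩ := isMinusculeWord_cons.1 h
    rw [wordAct_cons, height_reflFun_simple, hi, ih hl, List.length_cons]
    push_cast
    ring

lemma IsMinusculeWord.isReducedWord {lam : E} {l : List ι} (hlam : S.IsMinuscule lam)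
    (h : S.IsMinusculeWord lam l) : S.IsReducedWord l := by
  intro l' hl'
  have := hlam.height_wordAct_le l'
  rw [hl', h.height_wordAct] at this
  exact_mod_cast (by linarith : (l.length : ℝ) ≤ l'.length)

lemma IsMinuscule.exists_antidominant_mem_weylOrbit {x : E} (hx : S.IsMinuscule x) :
    ∃ y ∈ S.weylOrbit x, (∀ i, ⟪y, S.simple i⟫ ≤ 0) ∧
      ∃ g : ι → ℕ, x = y + ∑ i, (g i : ℝ) • S.simple i := by
  obtain ⟨C, hC⟩ := S.exists_abs_height_le
  -- How far `x` can be lowered by simple roots inside its orbit: bounded, because heights are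
  -- bounded below on the orbit, which lies on a sphere.
  set K : Set ℕ := {k | ∃ y ∈ S.weylOrbit x, ∃ g : ι → ℕ,
    x = y + ∑ i, (g i : ℝ) • S.simple i ∧ ∑ i, g i = k}
  have hK : 0 ∈ K := ⟨x, self_mem_weylOrbit x, 0, by simp, by simp⟩
  have hbdd : BddAbove K := by
    refine ⟨⌊S.height x + C * ‖x‖⌋₊, ?_⟩
    rintro _ ⟨y, hy, g, hxy, rfl⟩
    have hy_ge := (abs_le.1 (hC y)).1
    rw [norm_of_mem_weylOrbit hy] at hy_ge
    have hheight : S.height x = S.height y + ∑ i, (g i : ℝ) := by rw [hxy]; simp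
    apply Nat.le_floor
    push_cast
    linarith
  obtain ⟨y, hy, g, hxy, hg⟩ := Nat.sSup_mem ⟨0, hK⟩ hbdd
  refine ⟨y, hy, fun i => ?_, g, hxy⟩
  by_contra! hpos
  have hyi := (hx.of_mem_weylOrbit hy).pairR_eq_one_of_inner_pos i hpos
  have hsucc : sSup K + 1 ∈ K := by
    refine ⟨reflFun (S.simple i) y, weylOrbit_subset_of_mem hy (reflFun_mem_weylOrbit i y),
      g + Pi.single i 1, ?_, by simp [Finset.sum_add_distrib, hg]⟩
    rw [sum_natCast_add_single_smul, reflFun, hyi, one_smul, hxy]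
    abel
  exact (le_csSup hbdd hsucc).not_gt (Nat.lt_succ_self _)

lemma exists_inner_simple_neg_of_inUnitBox {y z : E} (hz : S.InUnitBox z) {D : ι → ℕ}
    (hD : D ≠ 0) (hyz : z = y + ∑ i, (D i : ℝ) • S.simple i) :
    ∃ j, D j ≠ 0 ∧ ⟪y, S.simple j⟫ < 0 := by
  by_contra! h
  refine hD (funext fun i => ?_)
  have hcoord : ∀ k, S.coweightPair (-y) k = D k - S.coweightPair z k := by
    intro k
    rw [show -y = ∑ i, (D i : ℝ) • S.simple i - z by rw [hyz]; abel, coweightPair_sub,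
      coweightPair_sum_smul_simple]
  have hle := coweightPair_nonpos_of_inner_simple_nonpos (-y) (fun j hj => by
    rw [inner_neg_left, neg_nonpos]
    refine h j fun hDj => ?_
    rw [hcoord, hDj, Nat.cast_zero] at hj
    linarith [(hz j).1]) i
  rw [hcoord] at hle
  have : (D i : ℝ) < 1 := by linarith [(hz i).2]
  exact_mod_cast Nat.lt_one_iff.1 (by exact_mod_cast this)

lemma IsMinuscule.inUnitBox_mem_weylOrbit_of_ge {y z : E} (hy : S.IsMinuscule y)
    (hz : S.InUnitBox z) (D : ι → ℕ) (hyz : z = y + ∑ i, (D i : ℝ) • S.simple i) :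
    z ∈ S.weylOrbit y := by
  induction D using WellFoundedLT.induction generalizing y with
  | _ D ih =>
  rcases eq_or_ne D 0 with rfl | hD
  · simpa [hyz] using self_mem_weylOrbit y
  obtain ⟨j, hDj, hneg⟩ := exists_inner_simple_neg_of_inUnitBox hz hD hyz
  have hrefl : reflFun (S.simple j) y = y + S.simple j := by
    simp [reflFun, hy.pairR_eq_neg_one_of_inner_neg j hneg]
  refine weylOrbit_subset_of_mem (reflFun_mem_weylOrbit j y)
    (ih _ (sub_single_lt hDj) ((isMinuscule_reflFun_iff j).2 hy) ?_)
  rw [hrefl, sum_natCast_sub_single_smul hDj, hyz]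
  abel

lemma IsMinuscule.inUnitBox_mem_weylOrbit_of_le {x z : E} (hx : S.IsMinuscule x)
    (hz : S.InUnitBox z) (m : ι → ℕ) (hxz : x = z + ∑ i, (m i : ℝ) • S.simple i) :
    z ∈ S.weylOrbit x := by
  obtain ⟨y, hy, hanti, g, hxy⟩ := hx.exists_antidominant_mem_weylOrbit
  have hmg : m ≤ g := fun i => by
    have hcoord := congrArg (S.coweightPair · i) (hxz.symm.trans hxy)
    simp only [coweightPair_add, coweightPair_sum_smul_simple] at hcoord
    have := coweightPair_nonpos_of_inner_simple_nonpos y (fun j _ => hanti j) i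
    exact_mod_cast (by linarith [(hz i).1] : (m i : ℝ) ≤ g i)
  have hzy : z = y + ∑ i, ((g - m : ι → ℕ) i : ℝ) • S.simple i := by
    simp only [Pi.sub_apply, Nat.cast_sub (hmg _), sub_smul, Finset.sum_sub_distrib]
    rw [eq_sub_of_add_eq hxz.symm, hxy]
    abel
  exact weylOrbit_subset_of_mem hy ((hx.of_mem_weylOrbit hy).inUnitBox_mem_weylOrbit_of_ge hz _ hzy)

lemma IsMinuscule.exists_pairR_eq_one_of_inUnitBox {x z : E} (hx : S.IsMinuscule x)
    (hz : S.InUnitBox z) {m : ι → ℕ} (hm : m ≠ 0) (hxz : x = z + ∑ i, (m i : ℝ) • S.simple i) :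
    ∃ j, m j ≠ 0 ∧ pairR x (S.simple j) = 1 := by
  have hnorm : ‖z‖ = ‖x‖ := norm_of_mem_weylOrbit (hx.inUnitBox_mem_weylOrbit_of_le hz m hxz)
  set d := ∑ i, (m i : ℝ) • S.simple i with hd
  have hd0 : d ≠ 0 := fun h => hm (funext fun i => by
    have := coweightPair_sum_smul_simple (S := S) (fun i => (m i : ℝ)) i
    rw [← hd, h] at this
    simpa [coweightPair, eq_comm] using this)
  -- `z = x - d` has the same norm as `x`, so `2 ⟪x, d⟫ = ‖d‖ ^ 2`.
  have hxd : 0 < ⟪x, d⟫ := by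
    have h := norm_sub_sq_real x d
    rw [← eq_sub_of_add_eq hxz.symm, hnorm] at h
    nlinarith [norm_pos_iff.2 hd0]
  rw [hd, inner_sum] at hxd
  obtain ⟨j, -, hj⟩ := Finset.exists_lt_of_sum_lt (f := fun _ ↦ (0 : ℝ)) (by simpa using hxd)
  rw [real_inner_smul_right] at hj
  refine ⟨j, fun h => by simp [h] at hj, hx.pairR_eq_one_of_inner_pos j ?_⟩
  exact pos_of_mul_pos_right hj (Nat.cast_nonneg _)

lemma IsMinuscule.exists_isMinusculeWord_of_inUnitBox {x z : E} (hx : S.IsMinuscule x)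
    (hz : S.InUnitBox z) (m : ι → ℕ) (hxz : x = z + ∑ i, (m i : ℝ) • S.simple i) :
    ∃ l, S.wordAct l z = x ∧ S.IsMinusculeWord z l := by
  induction m using WellFoundedLT.induction generalizing x with
  | _ m ih =>
  rcases eq_or_ne m 0 with rfl | hm
  · exact ⟨[], by simpa using hxz.symm, isMinusculeWord_nil z⟩
  obtain ⟨j, hmj, hj⟩ := hx.exists_pairR_eq_one_of_inUnitBox hz hm hxz
  have hrefl : reflFun (S.simple j) x = x - S.simple j := by simp [reflFun, hj]
  obtain ⟨l, hl, hword⟩ := ih _ (sub_single_lt hmj) ((isMinuscule_reflFun_iff j).2 hx)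
    (by rw [hrefl, sum_natCast_sub_single_smul hmj, hxz]; abel)
  refine ⟨j :: l, by rw [wordAct_cons, hl, reflFun_reflFun (simple_ne_zero j)],
    isMinusculeWord_cons.2 ⟨?_, hword⟩⟩
  rw [hl, hrefl, pairR_sub_left, hj, pairR_self (simple_ne_zero j)]
  norm_num

end RootSystemCtx

theorem fractional_part_in_weyl_orbit_general
    {ι E : Type} [Fintype ι] [DecidableEq ι]
    [NormedAddCommGroup E] [InnerProductSpace ℝ E]
    (S : RootSystemCtx ι E)
    (u : E)
    (humin : ∀ a ∈ S.Roots, pairR u a = -1 ∨ pairR u a = 0 ∨ pairR u a = 1)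
    (ℓ : ι → ℝ) (hℓ : ∀ i, 0 ≤ ℓ i) (hu : u = ∑ i, ℓ i • S.simple i)
    (u' : E) (hu' : u' = ∑ i, Int.fract (ℓ i) • S.simple i) :
    ∃ w : E → E, S.IsMinusculeFor u' w ∧ w u' = u := by
  have hbox : S.InUnitBox u' := fun i => by
    rw [hu', RootSystemCtx.coweightPair_sum_smul_simple]
    exact ⟨Int.fract_nonneg _, Int.fract_lt_one _⟩
  have hsplit : u = u' + ∑ i, (⌊ℓ i⌋₊ : ℝ) • S.simple i := by
    rw [hu, hu', ← Finset.sum_add_distrib]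
    refine Finset.sum_congr rfl fun i _ => ?_
    rw [← add_smul, natCast_floor_eq_intCast_floor (hℓ i), Int.fract_add_floor]
  have hmin : S.IsMinuscule u := humin
  obtain ⟨l, hl, hword⟩ := hmin.exists_isMinusculeWord_of_inUnitBox hbox _ hsplit
  have hu'min : S.IsMinuscule u' := (RootSystemCtx.isMinuscule_wordAct_iff l).1 (hl ▸ hmin)
  exact ⟨S.wordAct l, ⟨l, rfl, hword.isReducedWord hu'min, hword⟩, hl⟩

/-- Lemma on fractional parts, simply-laced case. Suppose
`u ∈ P(R)` is minuscule and `u = ∑_{i∈I} ℓ_i α_i` with `ℓ_i ≥ 0` for all `i`.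
Set `u' := ∑_{i∈I} ℓ'_i α_i` where `ℓ'_i = ℓ_i - ⌊ℓ_i⌋`. Then there is a
`u'`-minuscule Weyl group element `w` with `w(u') = u`. -/
theorem fractional_part_in_weyl_orbit
    {ι E : Type} [Fintype ι] [DecidableEq ι]
    [NormedAddCommGroup E] [InnerProductSpace ℝ E]
    (S : RootSystemCtx ι E) (hSL : S.SimplyLaced)
    (u : E) (huW : S.IsWeight u)
    (humin : ∀ a ∈ S.Roots, pairR u a = -1 ∨ pairR u a = 0 ∨ pairR u a = 1)
    (ℓ : ι → ℝ) (hℓ : ∀ i, 0 ≤ ℓ i) (hu : u = ∑ i, ℓ i • S.simple i)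
    (u' : E) (hu' : u' = ∑ i, Int.fract (ℓ i) • S.simple i) :
    ∃ w : E → E, S.IsMinusculeFor u' w ∧ w u' = u :=
  fractional_part_in_weyl_orbit_general S u humin ℓ hℓ hu u' hu'
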